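/- arXiv:2305.16089 — 7 statements merged into one kernel-verified Lean document; each statement's English description precedes it below -/
import Mathlib

section
/- For every integer n ≥ 3: (i) for every integer h ≥ 2n − 2, q_{n,n}(h) = q_{n−2,n−2}(h − (2n−2)) + (6n − 8); and (ii) for every integer h, q_{n,n}(h) ≤ q_{n−2,n−2}(h − (2n−2)) + (6n − 8), where the equality and inequality are in ℤ ∪ {+∞}. -/
/-!
Since `2pq - 2(p-1)(q-1) = 2(p+q) - 2`, shifting `h` down by `2n - 2` sends the block of the
splitting `n = p + q` to the block of `n - 2 = (p-1) + (q-1)`, and the formula for `q_{n,n}`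
changes by exactly `6n - 8` under this shift. The top of the range moves in the same way,
`⌊(n-2)²/2⌋ = ⌊n²/2⌋ - (2n-2)`, and below `2n - 2` the shifted function is `+∞`.
-/

open Classical in
/-- The quantum lower bound function `q_{n,n}` for the Khovanov homology of `T(n,n)`:
`+∞` outside `[0, ⌊n²/2⌋]`, `n² - 2n` at `h = 0`, and `n² + 2⌈h/2⌉ - 2p` for
`2(p+1)(q-1) < h ≤ 2pq` where `p ≥ q ≥ 1`, `p + q = n` (with `q = n - p`). -/
noncomputable def qnn (n h : ℤ) : WithTop ℤ :=
  if h < 0 ∨ n ^ 2 / 2 < h then ⊤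
  else if h = 0 then ((n ^ 2 - 2 * n : ℤ) : WithTop ℤ)
  else if hc : ∃ p : ℤ, n - p ≤ p ∧ 1 ≤ n - p ∧
      2 * (p + 1) * (n - p - 1) < h ∧ h ≤ 2 * p * (n - p)
    then ((n ^ 2 + 2 * ((h + 1) / 2) - 2 * hc.choose : ℤ) : WithTop ℤ)
  else ⊤

def IsQnnBlock (n p h : ℤ) : Prop :=
  n - p ≤ p ∧ 1 ≤ n - p ∧ 2 * (p + 1) * (n - p - 1) < h ∧ h ≤ 2 * p * (n - p)

namespace IsQnnBlock

variable {n p h : ℤ}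

lemma pos (hb : IsQnnBlock n p h) : 0 < h := by
  obtain ⟨h1, h2, h3, -⟩ := hb
  nlinarith

lemma le_sq_div_two (hb : IsQnnBlock n p h) : h ≤ n ^ 2 / 2 := by
  obtain ⟨-, -, -, h4⟩ := hb
  rw [Int.le_ediv_iff_mul_le two_pos]
  nlinarith [sq_nonneg (n - 2 * p)]

-- The block of `p` is `(f (p+1), f p]` for `f p = 2p(n-p)`, which decreases for `p ≥ n/2`.
lemma unique {p' : ℤ} (hb : IsQnnBlock n p h) (hb' : IsQnnBlock n p' h) : p' = p := by
  obtain ⟨a1, a2, a3, a4⟩ := hb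
  obtain ⟨b1, b2, b3, b4⟩ := hb'
  rcases lt_trichotomy p' p with hlt | heq | hgt
  · nlinarith [mul_nonneg (by omega : (0:ℤ) ≤ p + 1 - p') (by omega : (0:ℤ) ≤ p + p' + 1 - n)]
  · exact heq
  · nlinarith [mul_nonneg (by omega : (0:ℤ) ≤ p' + 1 - p) (by omega : (0:ℤ) ≤ p + p' + 1 - n)]

lemma shift (hb : IsQnnBlock n p h) (hh : 2 * n - 2 < h) :
    IsQnnBlock (n - 2) (p - 1) (h - (2 * n - 2)) := by
  obtain ⟨a1, a2, a3, a4⟩ := hb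
  have hp : p ≤ n - 2 := by
    by_contra hc
    have hpn : p = n - 1 := by omega
    subst hpn
    nlinarith
  exact ⟨by omega, by omega, by nlinarith, by nlinarith⟩

end IsQnnBlock

-- Take the largest `p ≥ n/2` with `h ≤ 2p(n-p)`; maximality gives the lower end of the block.
lemma exists_isQnnBlock {n h : ℤ} (hn : 1 ≤ n) (h0 : 0 < h) (hh : h ≤ n ^ 2 / 2) :
    ∃ p, IsQnnBlock n p h := by
  have h2 : h * 2 ≤ n ^ 2 := (Int.le_ediv_iff_mul_le two_pos).mp hh
  set P : ℤ → Prop := fun p => n - p ≤ p ∧ h ≤ 2 * p * (n - p)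
  have hbdd : ∃ b : ℤ, ∀ z : ℤ, P z → z ≤ b :=
    ⟨n, fun z ⟨hz1, hz2⟩ => by by_contra! hc; nlinarith⟩
  have hinh : ∃ z : ℤ, P z := by
    rcases Int.even_or_odd n with ⟨k, hk⟩ | ⟨k, hk⟩
    · exact ⟨k, by omega, by nlinarith⟩
    · refine ⟨k + 1, by omega, ?_⟩
      have : h ≤ 2 * (k * k) + 2 * k := by
        have : h * 2 ≤ 4 * (k * k) + 4 * k + 1 := by nlinarith
        omega
      nlinarith
  obtain ⟨p, ⟨b1, b2⟩, hmax⟩ := Int.exists_greatest_of_bdd hbdd hinh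
  have hq : 1 ≤ n - p := by
    by_contra! hc
    nlinarith
  refine ⟨p, b1, hq, ?_, b2⟩
  by_contra! hc
  have := hmax (p + 1) ⟨by omega, by linarith⟩
  omega

lemma qnn_of_lt_zero {n h : ℤ} (hh : h < 0) : qnn n h = ⊤ := by
  rw [qnn, if_pos (Or.inl hh)]

lemma qnn_of_sq_div_two_lt {n h : ℤ} (hh : n ^ 2 / 2 < h) : qnn n h = ⊤ := by
  rw [qnn, if_pos (Or.inr hh)]

lemma qnn_zero (n : ℤ) : qnn n 0 = ((n ^ 2 - 2 * n : ℤ) : WithTop ℤ) := by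
  rw [qnn, if_neg (by simpa using Int.ediv_nonneg (sq_nonneg n) zero_le_two), if_pos rfl]

lemma qnn_of_isQnnBlock {n p h : ℤ} (hb : IsQnnBlock n p h) :
    qnn n h = ((n ^ 2 + 2 * ((h + 1) / 2) - 2 * p : ℤ) : WithTop ℤ) := by
  have hc : ∃ p, IsQnnBlock n p h := ⟨p, hb⟩
  unfold IsQnnBlock at hc
  rw [qnn, if_neg (by simpa using ⟨hb.pos.le, hb.le_sq_div_two⟩), if_neg hb.pos.ne',
    dif_pos hc, hb.unique hc.choose_spec]

lemma qnn_two_mul_sub_two {n : ℤ} (hn : 2 ≤ n) : qnn n (2 * n - 2) = ((n ^ 2 : ℤ) : WithTop ℤ) := by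
  rw [qnn_of_isQnnBlock (p := n - 1) ⟨by omega, by omega, by nlinarith, by nlinarith⟩]
  congr 1
  omega

lemma sub_two_sq_div_two (n : ℤ) : (n - 2) ^ 2 / 2 = n ^ 2 / 2 - (2 * n - 2) := by
  rw [show n ^ 2 = (n - 2) ^ 2 + 2 * (2 * n - 2) by ring, Int.add_mul_ediv_left _ _ two_ne_zero]
  ring

/-- Equation (a) of Lemma 5.3: for `n ≥ 3`, the shifted function
`q_(n-2,n-2)[2n-2](6n-8)` equals `q_(n,n)` on `h ≥ 2n - 2` and bounds it above
everywhere. -/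
theorem qnn_shift (n : ℤ) (hn : 3 ≤ n) :
    (∀ h : ℤ, 2 * n - 2 ≤ h →
      qnn n h = qnn (n - 2) (h - (2 * n - 2)) + ((6 * n - 8 : ℤ) : WithTop ℤ)) ∧
    (∀ h : ℤ,
      qnn n h ≤ qnn (n - 2) (h - (2 * n - 2)) + ((6 * n - 8 : ℤ) : WithTop ℤ)) := by
  have eq_of_le : ∀ h : ℤ, 2 * n - 2 ≤ h →
      qnn n h = qnn (n - 2) (h - (2 * n - 2)) + ((6 * n - 8 : ℤ) : WithTop ℤ) := by
    intro h hh
    rcases hh.eq_or_lt with rfl | hlt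
    · rw [sub_self, qnn_zero, qnn_two_mul_sub_two (by omega), ← WithTop.coe_add]
      congr 1
      ring
    by_cases htop : n ^ 2 / 2 < h
    · rw [qnn_of_sq_div_two_lt htop, qnn_of_sq_div_two_lt (by rw [sub_two_sq_div_two]; omega),
        top_add]
    obtain ⟨p, hb⟩ := exists_isQnnBlock (by omega) (by omega) (not_lt.mp htop)
    rw [qnn_of_isQnnBlock hb, qnn_of_isQnnBlock (hb.shift hlt), ← WithTop.coe_add,
      show (h - (2 * n - 2) + 1) / 2 = (h + 1) / 2 - (n - 1) by omega]
    congr 1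
    ring
  refine ⟨eq_of_le, fun h => ?_⟩
  by_cases hh : 2 * n - 2 ≤ h
  · exact (eq_of_le h hh).le
  · rw [qnn_of_lt_zero (n := n - 2) (by omega), top_add]
    exact le_top
end

section
/- For every integer n ≥ 3 and every integer h with h ≤ ⌊n²/2⌋ + ⌊n/2⌋ − 1, one has q_{n+1,n}(h) ≤ q_{n−1,n−2}(h − (2n−2)) + (6n − 6) in ℤ ∪ {+∞}, where q_{n−1,n−2} denotes the function q_{m+1,m} with m = n − 2. -/
open Classical in
/-- The quantum lower bound function `q_{n+1,n}` for the Khovanov homology of `T(n+1,n)`: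
`+∞` outside `[0, ⌊n²/2⌋ + ⌊n/2⌋]`; `q_{n,n}(h) + n - 3` at `h = 2pq + 1 ≤ ⌊n²/2⌋`
(`p ≥ q ≥ 1`, `p + q = n`); `q_{n,n}(h) + n - 1` at other `h` with `0 ≤ h ≤ ⌊n²/2⌋`;
and `⌊n²/2⌋ + 2h - 1` for `⌊n²/2⌋ ≤ h ≤ ⌊n²/2⌋ + ⌊n/2⌋`. -/
noncomputable def qn1n (n h : ℤ) : WithTop ℤ :=
  if h < 0 ∨ n ^ 2 / 2 + n / 2 < h then ⊤
  else if ∃ p : ℤ, n - p ≤ p ∧ 1 ≤ n - p ∧ h = 2 * p * (n - p) + 1 ∧ h ≤ n ^ 2 / 2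
    then qnn n h + ((n - 3 : ℤ) : WithTop ℤ)
  else if h ≤ n ^ 2 / 2 then qnn n h + ((n - 1 : ℤ) : WithTop ℤ)
  else ((n ^ 2 / 2 + 2 * h - 1 : ℤ) : WithTop ℤ)

/-! Shifting `h` by `2n - 2` maps the block `(p, q)` of `q_{n-2,n-2}` onto the block
`(p + 1, q + 1)` of `q_{n,n}`, because `2(p+1)(q+1) = 2pq + 2n - 2` and
`2(p+2)q = 2(p+1)(q-1) + 2n - 2`; on it `q_{n,n}` exceeds `q_{n-2,n-2}` by exactly `6n - 8`.
The exceptional points `2pq + 1` of `q_{n-1,n-2}` move along with the blocks, so the offsets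
`n - 1` and `n - 3` in `q_{n+1,n}` cost at most `2` more. On the tails, of slope `2`, the shift
costs exactly `6n - 6`. -/

lemma qnn_block_unique {n h p₁ p₂ : ℤ}
    (hp₁ : n - p₁ ≤ p₁) (hl₁ : 2 * (p₁ + 1) * (n - p₁ - 1) < h) (hu₁ : h ≤ 2 * p₁ * (n - p₁))
    (hp₂ : n - p₂ ≤ p₂) (hl₂ : 2 * (p₂ + 1) * (n - p₂ - 1) < h) (hu₂ : h ≤ 2 * p₂ * (n - p₂)) :
    p₁ = p₂ := by
  by_contra hne
  rcases lt_or_gt_of_ne hne with hlt | hlt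
  · nlinarith [mul_nonneg (show (0 : ℤ) ≤ p₂ - p₁ - 1 by omega)
      (show (0 : ℤ) ≤ p₁ + 1 + p₂ - n by omega)]
  · nlinarith [mul_nonneg (show (0 : ℤ) ≤ p₁ - p₂ - 1 by omega)
      (show (0 : ℤ) ≤ p₂ + 1 + p₁ - n by omega)]

lemma qnn_of_block {n h p : ℤ} (hp : n - p ≤ p) (hq : 1 ≤ n - p)
    (hl : 2 * (p + 1) * (n - p - 1) < h) (hu : h ≤ 2 * p * (n - p)) :
    qnn n h = ((n ^ 2 + 2 * ((h + 1) / 2) - 2 * p : ℤ) : WithTop ℤ) := by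
  have hpos : 0 < h := lt_of_le_of_lt (by nlinarith) hl
  have hle : h ≤ n ^ 2 / 2 := by
    rw [Int.le_ediv_iff_mul_le two_pos]
    nlinarith [sq_nonneg (n - 2 * p)]
  have hblock : ∃ p' : ℤ, n - p' ≤ p' ∧ 1 ≤ n - p' ∧
      2 * (p' + 1) * (n - p' - 1) < h ∧ h ≤ 2 * p' * (n - p') := ⟨p, hp, hq, hl, hu⟩
  rw [qnn, if_neg (by omega), if_neg hpos.ne', dif_pos hblock]
  obtain ⟨hp', -, hl', hu'⟩ := hblock.choose_spec
  rw [qnn_block_unique hp' hl' hu' hp hl hu]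

lemma eq_zero_or_qnn_block_of_qnn_ne_top {n h : ℤ} (hfin : qnn n h ≠ ⊤) :
    h = 0 ∨ ∃ p : ℤ, n - p ≤ p ∧ 1 ≤ n - p ∧
      2 * (p + 1) * (n - p - 1) < h ∧ h ≤ 2 * p * (n - p) := by
  unfold qnn at hfin
  split_ifs at hfin with _ h0 hblock
  · exact absurd rfl hfin
  · exact .inl h0
  · exact .inr hblock
  · exact absurd rfl hfin

lemma sq_add_two_ediv_two (m : ℤ) : (m + 2) ^ 2 / 2 = m ^ 2 / 2 + (2 * m + 2) := by
  rw [show (m + 2) ^ 2 = m ^ 2 + (2 * m + 2) * 2 by ring, Int.add_mul_ediv_right _ _ two_ne_zero]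

lemma add_coe_add_coe_eq {α : Type*} [AddSemigroup α] (x : WithTop α) {a b c d : α}
    (h : a + b = c + d) : x + a + b = x + c + d := by
  rw [add_assoc, add_assoc, ← WithTop.coe_add, ← WithTop.coe_add, h]

lemma qnn_add_le {m : ℤ} (hm : 0 ≤ m) (h : ℤ) :
    qnn (m + 2) (h + (2 * m + 2)) ≤ qnn m h + ((6 * m + 4 : ℤ) : WithTop ℤ) := by
  rcases eq_or_ne (qnn m h) ⊤ with htop | hfin
  · rw [htop, top_add]
    exact le_top
  rcases eq_zero_or_qnn_block_of_qnn_ne_top hfin with rfl | ⟨p, hp, hq, hl, hu⟩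
  · rw [qnn_zero, qnn_of_block (p := m + 1) (by omega) (by omega) (by nlinarith) (by nlinarith),
      ← WithTop.coe_add, WithTop.coe_le_coe, show (0 + (2 * m + 2) + 1) / 2 = m + 1 by omega]
    nlinarith
  · rw [qnn_of_block hp hq hl hu,
      qnn_of_block (p := p + 1) (by omega) (by omega) (by nlinarith) (by nlinarith),
      ← WithTop.coe_add, WithTop.coe_le_coe]
    have hceil : (h + (2 * m + 2) + 1) / 2 = (h + 1) / 2 + (m + 1) := by omega
    rw [hceil]
    nlinarith

lemma qn1n_eq_top {n h : ℤ} (hr : h < 0 ∨ n ^ 2 / 2 + n / 2 < h) : qn1n n h = ⊤ :=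
  if_pos hr

lemma qn1n_of_exceptional {n h : ℤ}
    (hex : ∃ p : ℤ, n - p ≤ p ∧ 1 ≤ n - p ∧ h = 2 * p * (n - p) + 1 ∧ h ≤ n ^ 2 / 2) :
    qn1n n h = qnn n h + ((n - 3 : ℤ) : WithTop ℤ) := by
  obtain ⟨p, hp, hq, rfl, hle⟩ := hex
  have hpos : 0 < 2 * p * (n - p) + 1 := by nlinarith
  rw [qn1n, if_neg (by omega), if_pos ⟨p, hp, hq, rfl, hle⟩]

lemma qn1n_of_not_exceptional {n h : ℤ} (hn : 0 ≤ n) (h0 : 0 ≤ h) (hle : h ≤ n ^ 2 / 2)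
    (hex : ¬∃ p : ℤ, n - p ≤ p ∧ 1 ≤ n - p ∧ h = 2 * p * (n - p) + 1 ∧ h ≤ n ^ 2 / 2) :
    qn1n n h = qnn n h + ((n - 1 : ℤ) : WithTop ℤ) := by
  rw [qn1n, if_neg (by omega), if_neg hex, if_pos hle]

lemma qn1n_le_qnn_add {n h : ℤ} (hn : 0 ≤ n) (h0 : 0 ≤ h) (hle : h ≤ n ^ 2 / 2) :
    qn1n n h ≤ qnn n h + ((n - 1 : ℤ) : WithTop ℤ) := by
  by_cases hex : ∃ p : ℤ, n - p ≤ p ∧ 1 ≤ n - p ∧ h = 2 * p * (n - p) + 1 ∧ h ≤ n ^ 2 / 2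
  · rw [qn1n_of_exceptional hex]
    exact add_le_add_right (WithTop.coe_le_coe.2 (by omega)) _
  · exact (qn1n_of_not_exceptional hn h0 hle hex).le

lemma qn1n_of_tail {n h : ℤ} (hlt : n ^ 2 / 2 < h) (hle : h ≤ n ^ 2 / 2 + n / 2) :
    qn1n n h = ((n ^ 2 / 2 + 2 * h - 1 : ℤ) : WithTop ℤ) := by
  have hex : ¬∃ p : ℤ, n - p ≤ p ∧ 1 ≤ n - p ∧ h = 2 * p * (n - p) + 1 ∧ h ≤ n ^ 2 / 2 :=
    fun ⟨_, _, _, _, hle'⟩ ↦ hlt.not_ge hle'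
  have := Int.ediv_nonneg (sq_nonneg n) two_pos.le
  rw [qn1n, if_neg (by omega), if_neg hex, if_neg hlt.not_ge]

lemma qn1n_add_le {m : ℤ} (hm : 0 ≤ m) (h : ℤ) :
    qn1n (m + 2) (h + (2 * m + 2)) ≤ qn1n m h + ((6 * m + 6 : ℤ) : WithTop ℤ) := by
  by_cases hr : h < 0 ∨ m ^ 2 / 2 + m / 2 < h
  · rw [qn1n_eq_top hr, top_add]
    exact le_top
  have hsq := sq_add_two_ediv_two m
  rcases le_or_gt h (m ^ 2 / 2) with hlow | htail
  · by_cases hex : ∃ p : ℤ, m - p ≤ p ∧ 1 ≤ m - p ∧ h = 2 * p * (m - p) + 1 ∧ h ≤ m ^ 2 / 2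
    · obtain ⟨p, hp, hq, hpq, -⟩ := hex
      have hex' : ∃ p' : ℤ, m + 2 - p' ≤ p' ∧ 1 ≤ m + 2 - p' ∧
          h + (2 * m + 2) = 2 * p' * (m + 2 - p') + 1 ∧ h + (2 * m + 2) ≤ (m + 2) ^ 2 / 2 :=
        ⟨p + 1, by omega, by omega, by rw [hpq]; ring, by omega⟩
      rw [qn1n_of_exceptional hex', qn1n_of_exceptional ⟨p, hp, hq, hpq, hlow⟩]
      calc qnn (m + 2) (h + (2 * m + 2)) + ((m + 2 - 3 : ℤ) : WithTop ℤ)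
          ≤ qnn m h + ((6 * m + 4 : ℤ) : WithTop ℤ) + ((m + 2 - 3 : ℤ) : WithTop ℤ) :=
            add_le_add_left (qnn_add_le hm h) _
        _ = qnn m h + ((m - 3 : ℤ) : WithTop ℤ) + ((6 * m + 6 : ℤ) : WithTop ℤ) :=
            add_coe_add_coe_eq _ (by ring)
    · rw [qn1n_of_not_exceptional hm (by omega) hlow hex]
      calc qn1n (m + 2) (h + (2 * m + 2))
          ≤ qnn (m + 2) (h + (2 * m + 2)) + ((m + 2 - 1 : ℤ) : WithTop ℤ) :=
            qn1n_le_qnn_add (by omega) (by omega) (by omega)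
        _ ≤ qnn m h + ((6 * m + 4 : ℤ) : WithTop ℤ) + ((m + 2 - 1 : ℤ) : WithTop ℤ) :=
            add_le_add_left (qnn_add_le hm h) _
        _ = qnn m h + ((m - 1 : ℤ) : WithTop ℤ) + ((6 * m + 6 : ℤ) : WithTop ℤ) :=
            add_coe_add_coe_eq _ (by ring)
  · rw [qn1n_of_tail htail (by omega), qn1n_of_tail (by omega) (by omega), ← WithTop.coe_add,
      WithTop.coe_le_coe]
    omega

theorem qn1n_shift_le_general (n : ℤ) (hn : 3 ≤ n) (h : ℤ) :
    qn1n n h ≤ qn1n (n - 2) (h - (2 * n - 2)) + ((6 * n - 6 : ℤ) : WithTop ℤ) := by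
  have hshift := qn1n_add_le (m := n - 2) (by omega) (h - (2 * n - 2))
  rwa [show n - 2 + 2 = n by ring, show h - (2 * n - 2) + (2 * (n - 2) + 2) = h by ring,
    show 6 * (n - 2) + 6 = 6 * n - 6 by ring] at hshift

/-- Equation (b) of Lemma 5.3: for `n ≥ 3` and `h ≤ ⌊n²/2⌋ + ⌊n/2⌋ - 1`,
`q_(n+1,n)(h) ≤ q_(n-1,n-2)(h - (2n-2)) + (6n - 6)`. -/
theorem qn1n_shift_le (n : ℤ) (hn : 3 ≤ n) (h : ℤ)
    (hmax : h ≤ n ^ 2 / 2 + n / 2 - 1) :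
    qn1n n h ≤ qn1n (n - 2) (h - (2 * n - 2)) + ((6 * n - 6 : ℤ) : WithTop ℤ) :=
  qn1n_shift_le_general n hn h
end

section
/- For every integer m ≥ 1 and every integer h with h ≠ 1 and h ≤ ⌊m²/2⌋ + ⌊m/2⌋, one has q_{m+1,m}(h) ≤ q_{m+1,m}(h − 1) + 2 in ℤ ∪ {+∞}. -/
/-!
Inside a block `(2(p+1)(q-1), 2pq]` one has `q_{m,m}(h) = m² - 2p + 2⌈h/2⌉`, which rises by `2`
at odd `h` and is constant at even `h`. The points `2pq + 1` carrying the extra `-2` of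
`q_{m+1,m}` are odd, and they are the first points of the blocks other than `(0, 2(m-1)]`, so a
step inside a block raises `q_{m+1,m}` by at most `2`. Entering a new block at `h = 2pq + 1`, the
index `p` drops by one and `q_{m,m}` rises by `4`, which the extra `-2` at `h` brings back to `2`;
entering the first block, at `h = 1`, the rise is `4`. Beyond `⌊m²/2⌋ = 2⌈m/2⌉⌊m/2⌋`, the top of
the last block, `q_{m+1,m}` has slope `2` and continues the value at `⌊m²/2⌋`.
-/

/-- `h` lies in the interval `(2(p+1)(q-1), 2pq]`, `q = n - p`, of the definition of `q_{n,n}`. -/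
def InBlock (n p h : ℤ) : Prop :=
  n - p ≤ p ∧ 1 ≤ n - p ∧ 2 * (p + 1) * (n - p - 1) < h ∧ h ≤ 2 * p * (n - p)

/-- The points `h = 2pq + 1 ≤ ⌊n²/2⌋` (`p ≥ q ≥ 1`, `p + q = n`) where `q_{n+1,n}` is
`q_{n,n} + n - 3` instead of `q_{n,n} + n - 1`. -/
def IsBlockTopSucc (n h : ℤ) : Prop :=
  ∃ p : ℤ, n - p ≤ p ∧ 1 ≤ n - p ∧ h = 2 * p * (n - p) + 1 ∧ h ≤ n ^ 2 / 2

theorem sq_ediv_two (n : ℤ) : n ^ 2 / 2 = 2 * (n - n / 2) * (n / 2) := by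
  rcases Int.even_or_odd' n with ⟨k, rfl | rfl⟩
  · rw [show (2 * k) ^ 2 = 2 * k * k * 2 by ring, Int.mul_ediv_cancel _ two_ne_zero,
      show 2 * k / 2 = k by omega]
    ring
  · rw [show (2 * k + 1) ^ 2 = 1 + (2 * k * k + 2 * k) * 2 by ring,
      Int.add_mul_ediv_right _ _ two_ne_zero, show (2 * k + 1) / 2 = k by omega]
    ring_nf

theorem sq_add_two_mul_ediv_two (n : ℤ) : n ^ 2 + 2 * (n / 2) = 2 * (n ^ 2 / 2) + n := by
  rw [sq_ediv_two]
  rcases Int.even_or_odd' n with ⟨k, rfl | rfl⟩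
  · rw [show 2 * k / 2 = k by omega]
    ring
  · rw [show (2 * k + 1) / 2 = k by omega]
    ring

namespace InBlock

variable {n p p' h : ℤ}

theorem two_le (hb : InBlock n p h) : 2 ≤ n := by
  obtain ⟨hpq, hq, -, -⟩ := hb
  omega

theorem pos (hb : InBlock n p h) : 0 < h := by
  obtain ⟨hpq, hq, hlow, -⟩ := hb
  nlinarith

theorem le_sq_ediv_two (hb : InBlock n p h) : h ≤ n ^ 2 / 2 := by
  obtain ⟨-, -, -, htop⟩ := hb
  rw [Int.le_ediv_iff_mul_le two_pos]
  nlinarith [sq_nonneg (n - 2 * p)]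

/-- The intervals are disjoint since `p ↦ 2p(n - p)` is decreasing on `p ≥ n/2`. -/
theorem unique (hb : InBlock n p h) (hb' : InBlock n p' h) : p = p' := by
  obtain ⟨hpq, -, hlow, htop⟩ := hb
  obtain ⟨hpq', -, hlow', htop'⟩ := hb'
  by_contra hne
  rcases lt_or_gt_of_ne hne with hlt | hlt
  · nlinarith [mul_nonneg (by omega : 0 ≤ p' - (p + 1)) (by omega : 0 ≤ p' + (p + 1) - n)]
  · nlinarith [mul_nonneg (by omega : 0 ≤ p - (p' + 1)) (by omega : 0 ≤ p + (p' + 1) - n)]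

theorem pred_or_eq_bottom (hb : InBlock n p h) :
    InBlock n p (h - 1) ∨ h - 1 = 2 * (p + 1) * (n - p - 1) := by
  obtain ⟨hpq, hq, hlow, htop⟩ := hb
  by_cases hlow' : 2 * (p + 1) * (n - p - 1) < h - 1
  · exact .inl ⟨hpq, hq, hlow', by omega⟩
  · exact .inr (by omega)

end InBlock

theorem inBlock_top {n p : ℤ} (hpq : n - p ≤ p) (hq : 1 ≤ n - p) :
    InBlock n p (2 * p * (n - p)) :=
  ⟨hpq, hq, by nlinarith, le_rfl⟩

theorem exists_inBlock_of_le {n h : ℤ} (h0 : 0 < h) :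
    ∀ q : ℕ, 2 * q ≤ n → h ≤ 2 * (n - q) * q → ∃ p, InBlock n p h
  | 0, _, hh => by simp at hh; omega
  | q + 1, hq, hh => by
    by_cases hlow : 2 * (n - q) * q < h
    · refine ⟨n - (q + 1), by omega, by omega, ?_, ?_⟩
      · convert hlow using 1; ring
      · convert hh using 1; push_cast; ring
    · exact exists_inBlock_of_le h0 q (by omega) (not_lt.1 hlow)

theorem exists_inBlock {n h : ℤ} (hn : 0 ≤ n) (h0 : 0 < h) (hN : h ≤ n ^ 2 / 2) :
    ∃ p, InBlock n p h := by
  refine exists_inBlock_of_le h0 (n / 2).toNat ?_ ?_ <;>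
    rw [Int.toNat_of_nonneg (by omega)]
  · omega
  · rwa [← sq_ediv_two]

theorem qnn_of_inBlock {n p h : ℤ} (hb : InBlock n p h) :
    qnn n h = ((n ^ 2 + 2 * ((h + 1) / 2) - 2 * p : ℤ) : WithTop ℤ) := by
  have hex : ∃ p', n - p' ≤ p' ∧ 1 ≤ n - p' ∧
      2 * (p' + 1) * (n - p' - 1) < h ∧ h ≤ 2 * p' * (n - p') := ⟨p, hb⟩
  rw [qnn, if_neg (by have := hb.pos; have := hb.le_sq_ediv_two; omega),
    if_neg hb.pos.ne', dif_pos hex, InBlock.unique hex.choose_spec hb]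

theorem IsBlockTopSucc.odd {n h : ℤ} (hs : IsBlockTopSucc n h) : Odd h := by
  obtain ⟨p, -, -, rfl, -⟩ := hs
  exact ⟨p * (n - p), by ring⟩

theorem not_isBlockTopSucc_of_inBlock_pred {n p h : ℤ} (hb : InBlock n p h)
    (hb' : InBlock n p (h - 1)) : ¬ IsBlockTopSucc n h := by
  rintro ⟨p', hpq', hq', htop, -⟩
  have hb'' : InBlock n p' (h - 1) := by
    rw [show h - 1 = 2 * p' * (n - p') by omega]
    exact inBlock_top hpq' hq'
  obtain rfl := hb'.unique hb''
  obtain ⟨-, -, -, hle⟩ := hb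
  omega

section qn1n

variable {n h : ℤ}

theorem qn1n_of_isBlockTopSucc (hs : IsBlockTopSucc n h) :
    qn1n n h = qnn n h + ((n - 3 : ℤ) : WithTop ℤ) := by
  obtain ⟨p, hpq, hq, htop, hN⟩ := hs
  have h0 : 0 < h := by nlinarith
  rw [qn1n, if_neg (by omega), if_pos ⟨p, hpq, hq, htop, hN⟩]

theorem qn1n_of_not_isBlockTopSucc (hn : 0 ≤ n) (h0 : 0 ≤ h) (hN : h ≤ n ^ 2 / 2)
    (hs : ¬ IsBlockTopSucc n h) : qn1n n h = qnn n h + ((n - 1 : ℤ) : WithTop ℤ) := by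
  rw [IsBlockTopSucc] at hs
  rw [qn1n, if_neg (by omega), if_neg hs, if_pos hN]

theorem qn1n_of_lt (hN : n ^ 2 / 2 < h) (hmax : h ≤ n ^ 2 / 2 + n / 2) :
    qn1n n h = ((n ^ 2 / 2 + 2 * h - 1 : ℤ) : WithTop ℤ) := by
  have hs : ¬ ∃ p : ℤ, n - p ≤ p ∧ 1 ≤ n - p ∧ h = 2 * p * (n - p) + 1 ∧ h ≤ n ^ 2 / 2 :=
    fun ⟨_, _, _, _, hle⟩ => by omega
  have := sq_nonneg n
  rw [qn1n, if_neg (by omega), if_neg hs, if_neg (by omega)]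

end qn1n

theorem qn1n_step_of_lt {n h : ℤ} (hN : n ^ 2 / 2 < h) (hmax : h ≤ n ^ 2 / 2 + n / 2) :
    qn1n n h ≤ qn1n n (h - 1) + ((2 : ℤ) : WithTop ℤ) := by
  rw [qn1n_of_lt hN hmax]
  rcases (by omega : n ^ 2 / 2 < h - 1 ∨ h - 1 = n ^ 2 / 2) with hN' | hN'
  · rw [qn1n_of_lt hN' (by omega)]
    norm_cast
    omega
  · have hb := inBlock_top (n := n) (p := n - n / 2) (by omega) (by omega)
    rw [sub_sub_cancel, ← sq_ediv_two, ← hN'] at hb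
    have heven : Even (h - 1) := ⟨(n - n / 2) * (n / 2), by rw [hN', sq_ediv_two]; ring⟩
    rw [qn1n_of_not_isBlockTopSucc (by omega) hb.pos.le hN'.le
      (fun hs => Int.not_even_iff_odd.2 hs.odd heven), qnn_of_inBlock hb]
    have := sq_add_two_mul_ediv_two n
    norm_cast
    omega

theorem qn1n_step_of_inBlock_bottom {n p h : ℤ} (hb : InBlock n p h)
    (hbot : h - 1 = 2 * (p + 1) * (n - p - 1)) (h1 : h ≠ 1) :
    qn1n n h ≤ qn1n n (h - 1) + ((2 : ℤ) : WithTop ℤ) := by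
  have ⟨hpq, hq, _, _⟩ := hb
  have hq2 : 2 ≤ n - p := by
    by_contra
    rw [show n - p - 1 = 0 by omega, mul_zero] at hbot
    omega
  have hb' : InBlock n (p + 1) (h - 1) := by
    rw [hbot, show n - p - 1 = n - (p + 1) by ring]
    exact inBlock_top (by omega) (by omega)
  have hs : IsBlockTopSucc n h :=
    ⟨p + 1, by omega, by omega, by rw [← sub_eq_iff_eq_add, hbot]; ring, hb.le_sq_ediv_two⟩
  obtain ⟨k, hk⟩ := hs.odd
  rw [qn1n_of_isBlockTopSucc hs, qn1n_of_not_isBlockTopSucc (by omega) hb'.pos.le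
    (by have := hb.le_sq_ediv_two; omega)
    (fun hs' => Int.not_even_iff_odd.2 hs.odd (odd_sub_one.1 hs'.odd)),
    qnn_of_inBlock hb, qnn_of_inBlock hb']
  norm_cast
  omega

theorem qn1n_step_of_inBlock_pred {n p h : ℤ} (hb : InBlock n p h) (hb' : InBlock n p (h - 1)) :
    qn1n n h ≤ qn1n n (h - 1) + ((2 : ℤ) : WithTop ℤ) := by
  rw [qn1n_of_not_isBlockTopSucc (by have := hb.two_le; omega) hb.pos.le hb.le_sq_ediv_two
    (not_isBlockTopSucc_of_inBlock_pred hb hb'), qnn_of_inBlock hb]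
  by_cases hs : IsBlockTopSucc n (h - 1)
  · obtain ⟨k, hk⟩ := hs.odd
    rw [qn1n_of_isBlockTopSucc hs, qnn_of_inBlock hb']
    norm_cast
    omega
  · rw [qn1n_of_not_isBlockTopSucc (by have := hb.two_le; omega) hb'.pos.le
      (by have := hb.le_sq_ediv_two; omega) hs, qnn_of_inBlock hb']
    norm_cast
    omega

/-- Equation (e) of Lemma 5.3: for `m ≥ 1` and every integer `h ≠ 1` with
`h ≤ ⌊m²/2⌋ + ⌊m/2⌋`, `q_(m+1,m)(h) ≤ q_(m+1,m)(h - 1) + 2`. -/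
theorem qn1n_step_one (m : ℤ) (hm : 1 ≤ m) (h : ℤ) (h1 : h ≠ 1)
    (hmax : h ≤ m ^ 2 / 2 + m / 2) :
    qn1n m h ≤ qn1n m (h - 1) + ((2 : ℤ) : WithTop ℤ) := by
  rcases lt_or_ge h 1 with hneg | hpos
  · simp [qn1n, show h - 1 < 0 by omega]
  by_cases hN : h ≤ m ^ 2 / 2
  · obtain ⟨p, hb⟩ := exists_inBlock (by omega) (by omega) hN
    rcases hb.pred_or_eq_bottom with hb' | hbot
    · exact qn1n_step_of_inBlock_pred hb hb'
    · exact qn1n_step_of_inBlock_bottom hb hbot h1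
  · exact qn1n_step_of_lt (not_le.1 hN) hmax
end

section
/- For all integers n ≥ 2 and p ≥ q ≥ 1 with p + q = n, if 2pq ≤ ⌊(n−1)²/2⌋ + ⌊(n−1)/2⌋ (so that q_{n,n−1}(2pq) is finite), then q_{n,n}(2pq) < q_{n,n−1}(2pq) + (n − 1), where q_{n,n−1} denotes the function q_{m+1,m} with m = n − 1. -/
/-- The `p`-th interval `(2(p+1)(q-1), 2pq]` of `qnn n`, with `q = n - p`, contains `h`. -/
def InQnnInterval (n h p : ℤ) : Prop :=
  n - p ≤ p ∧ 1 ≤ n - p ∧ 2 * (p + 1) * (n - p - 1) < h ∧ h ≤ 2 * p * (n - p)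

lemma mul_sub_le_mul_sub {n a b : ℤ} (hab : a ≤ b) (hn : n ≤ a + b) :
    b * (n - b) ≤ a * (n - a) := by
  nlinarith [mul_nonneg (sub_nonneg.2 hab) (sub_nonneg.2 hn)]

lemma InQnnInterval.pos {n h p : ℤ} (hp : InQnnInterval n h p) : 0 < h := by
  obtain ⟨hle, hq, hlo, -⟩ := hp
  nlinarith

lemma InQnnInterval.le_half_sq {n h p : ℤ} (hp : InQnnInterval n h p) : h ≤ n ^ 2 / 2 := by
  obtain ⟨-, -, -, hhi⟩ := hp
  have hsq : 4 * (p * (n - p)) ≤ n ^ 2 := by nlinarith [sq_nonneg (n - 2 * p)]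
  have hhi' : h ≤ 2 * (p * (n - p)) := by linarith
  generalize p * (n - p) = A at hsq hhi'
  generalize n ^ 2 = N at hsq ⊢
  omega

lemma InQnnInterval.unique {n h p p' : ℤ} (hp : InQnnInterval n h p)
    (hp' : InQnnInterval n h p') : p = p' := by
  wlog hlt : p < p' generalizing p p'
  · rcases (not_lt.1 hlt).lt_or_eq with hgt | heq
    · exact (this hp' hp hgt).symm
    · exact heq.symm
  have := mul_sub_le_mul_sub (n := n) (a := p + 1) (b := p') (by omega) (by linarith [hp.1])
  linarith [hp.2.2.1, hp'.2.2.2]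

open Classical in
lemma qnn_of_pos_of_le {n h : ℤ} (h0 : 0 < h) (hh : h ≤ n ^ 2 / 2) :
    qnn n h = if hc : ∃ p, InQnnInterval n h p
      then ((n ^ 2 + 2 * ((h + 1) / 2) - 2 * hc.choose : ℤ) : WithTop ℤ) else ⊤ := by
  rw [qnn, if_neg (by omega), if_neg h0.ne']
  rfl

lemma qnn_of_inQnnInterval {n h p : ℤ} (hp : InQnnInterval n h p) :
    qnn n h = ((n ^ 2 + 2 * ((h + 1) / 2) - 2 * p : ℤ) : WithTop ℤ) := by
  have hex : ∃ p, InQnnInterval n h p := ⟨p, hp⟩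
  rw [qnn_of_pos_of_le hp.pos hp.le_half_sq, dif_pos hex, hex.choose_spec.unique hp]

lemma le_qnn_of_forall_inQnnInterval_le {n h P : ℤ} (h0 : 0 < h)
    (hP : ∀ p, InQnnInterval n h p → p ≤ P) :
    ((n ^ 2 + 2 * ((h + 1) / 2) - 2 * P : ℤ) : WithTop ℤ) ≤ qnn n h := by
  by_cases hh : h ≤ n ^ 2 / 2
  · rw [qnn_of_pos_of_le h0 hh]
    split_ifs with hex
    · exact WithTop.coe_le_coe.2 (by linarith [hP _ hex.choose_spec])
    · exact le_top
  · rw [qnn, if_pos (Or.inr (not_le.1 hh))]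
    exact le_top

lemma qn1n_of_even_of_le_half_sq {m h : ℤ} (hm : 0 ≤ m) (heven : Even h) (h0 : 0 ≤ h)
    (hh : h ≤ m ^ 2 / 2) :
    qn1n m h = qnn m h + ((m - 1 : ℤ) : WithTop ℤ) := by
  have hodd : ¬ ∃ p : ℤ, m - p ≤ p ∧ 1 ≤ m - p ∧ h = 2 * p * (m - p) + 1 ∧
      h ≤ m ^ 2 / 2 := by
    rintro ⟨p, -, -, rfl, -⟩
    exact Int.not_even_iff_odd.2 ⟨p * (m - p), by ring⟩ heven
  rw [qn1n, if_neg (by omega), if_neg hodd, if_pos hh]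

lemma qn1n_of_half_sq_lt {m h : ℤ} (hlo : m ^ 2 / 2 < h) (hhi : h ≤ m ^ 2 / 2 + m / 2) :
    qn1n m h = ((m ^ 2 / 2 + 2 * h - 1 : ℤ) : WithTop ℤ) := by
  have := sq_nonneg m
  rw [qn1n, if_neg (by omega), if_neg (by omega), if_neg (by omega)]

lemma inQnnInterval_two_mul_mul {p q : ℤ} (hpq : q ≤ p) (hq : 1 ≤ q) :
    InQnnInterval (p + q) (2 * p * q) p :=
  ⟨by omega, by omega, by nlinarith, le_of_eq (by ring)⟩

lemma le_sub_two_of_inQnnInterval_two_mul_mul {p q p' : ℤ} (hpq : q ≤ p) (hq : 1 ≤ q)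
    (hp' : InQnnInterval (p + q - 1) (2 * p * q) p') : p' ≤ p - 2 := by
  obtain ⟨hp', -, -, hhi⟩ := hp'
  by_contra! hlt
  have := mul_sub_le_mul_sub (n := p + q - 1) (a := p - 1) (b := p') (by omega) (by omega)
  nlinarith

lemma le_sq_sub_of_two_mul_mul_le {p q : ℤ}
    (h : 2 * p * q ≤ (p + q - 1) ^ 2 / 2 + (p + q - 1) / 2) : p + q ≤ (p - q) ^ 2 := by
  have : 4 * (p * q) ≤ (p + q - 1) ^ 2 + (p + q - 1) := by
    rw [mul_assoc] at h
    omega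
  nlinarith

lemma sq_sub_le_of_half_sq_lt {p q : ℤ} (h : (p + q - 1) ^ 2 / 2 < 2 * p * q) :
    (p - q) ^ 2 ≤ 2 * (p + q) - 2 := by
  have : (p + q - 1) ^ 2 + 1 ≤ 4 * (p * q) := by
    rw [mul_assoc] at h
    omega
  nlinarith

theorem qnn_lt_qn1n_add_at_2pq_general (n p q : ℤ) (hpq : q ≤ p) (hq : 1 ≤ q)
    (hsum : p + q = n) (hmax : 2 * p * q ≤ (n - 1) ^ 2 / 2 + (n - 1) / 2) :
    qnn n (2 * p * q) < qn1n (n - 1) (2 * p * q) + ((n - 1 : ℤ) : WithTop ℤ) := by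
  subst hsum
  have hhalf : (2 * p * q + 1) / 2 = p * q := by rw [mul_assoc]; omega
  have hpos : 0 < 2 * p * q := by nlinarith
  rw [qnn_of_inQnnInterval (inQnnInterval_two_mul_mul hpq hq), hhalf]
  by_cases hlow : 2 * p * q ≤ (p + q - 1) ^ 2 / 2
  · have hlb := le_qnn_of_forall_inQnnInterval_le hpos
      fun _ ↦ le_sub_two_of_inQnnInterval_two_mul_mul hpq hq
    rw [hhalf] at hlb
    rw [qn1n_of_even_of_le_half_sq (by omega) ⟨p * q, by ring⟩ hpos.le hlow]
    calc (((p + q) ^ 2 + 2 * (p * q) - 2 * p : ℤ) : WithTop ℤ)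
        < (((p + q - 1) ^ 2 + 2 * (p * q) - 2 * (p - 2) : ℤ) : WithTop ℤ)
          + ((p + q - 1 - 1 : ℤ) : WithTop ℤ) + ((p + q - 1 : ℤ) : WithTop ℤ) := by
          simp only [← WithTop.coe_add, WithTop.coe_lt_coe]
          linarith
      _ ≤ _ := by gcongr
  · push Not at hlow
    rw [qn1n_of_half_sq_lt hlow hmax, ← WithTop.coe_add, WithTop.coe_lt_coe]
    have hd_lo := le_sq_sub_of_two_mul_mul_le hmax
    have hd_hi := sq_sub_le_of_half_sq_lt hlow
    have hd : 2 ≤ p - q := by nlinarith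
    have hfloor : (p + q - 1) ^ 2 ≤ 2 * ((p + q - 1) ^ 2 / 2) + 1 := by omega
    nlinarith

/-- Addendum to Lemma 5.3: inequality (d) is strict at `h = 2pq` for `p ≥ q ≥ 1`,
`p + q = n ≥ 2`, provided `2pq ≤ ⌊(n-1)²/2⌋ + ⌊(n-1)/2⌋`. -/
theorem qnn_lt_qn1n_add_at_2pq (n p q : ℤ) (hn : 2 ≤ n) (hpq : q ≤ p) (hq : 1 ≤ q)
    (hsum : p + q = n) (hmax : 2 * p * q ≤ (n - 1) ^ 2 / 2 + (n - 1) / 2) :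
    qnn n (2 * p * q) < qn1n (n - 1) (2 * p * q) + ((n - 1 : ℤ) : WithTop ℤ) :=
  qnn_lt_qn1n_add_at_2pq_general n p q hpq hq hsum hmax
end

section
/- For all integers p ≥ q ≥ 2 with p + q = n, if 2pq − 1 ≤ ⌊(n−1)²/2⌋ + ⌊(n−1)/2⌋ (so that q_{n,n−1}(2pq − 1) is finite), then q_{n,n}(2pq − 1) < q_{n,n−1}(2pq − 1) + (n − 1), where q_{n,n−1} denotes the function q_{m+1,m} with m = n − 1. -/
def MemQnnInterval (n p h : ℤ) : Prop :=
  n - p ≤ p ∧ 1 ≤ n - p ∧ 2 * (p + 1) * (n - p - 1) < h ∧ h ≤ 2 * p * (n - p)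

lemma lt_of_mul_sub_lt_mul_sub {m x y : ℤ} (hxy : m ≤ x + y)
    (h : y * (m - y) < x * (m - x)) : x < y := by
  by_contra! hyx
  nlinarith [mul_nonneg (sub_nonneg.2 hyx) (sub_nonneg.2 hxy)]

namespace MemQnnInterval

variable {n x h : ℤ}

lemma pos (hx : MemQnnInterval n x h) : 0 < h := by
  obtain ⟨h₁, h₂, h₃, -⟩ := hx
  nlinarith [mul_nonneg (by omega : (0 : ℤ) ≤ x + 1) (by omega : (0 : ℤ) ≤ n - x - 1)]

lemma le_sq_div_two (hx : MemQnnInterval n x h) : h ≤ n ^ 2 / 2 := by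
  rw [Int.le_ediv_iff_mul_le two_pos]
  nlinarith [hx.2.2.2, sq_nonneg (2 * x - n)]

lemma lt_of_two_mul_mul_sub_lt {y : ℤ} (hx : MemQnnInterval n x h)
    (hy : 2 * y * (n - y) < h) (hxy : n ≤ x + y) : x < y :=
  lt_of_mul_sub_lt_mul_sub hxy (by linarith [hx.2.2.2])

lemma unique {x' : ℤ} (hx : MemQnnInterval n x h) (hx' : MemQnnInterval n x' h) : x = x' := by
  have h₁ := hx.lt_of_two_mul_mul_sub_lt (y := x' + 1) (by linarith [hx'.2.2.1])
    (by linarith [hx.1, hx'.1])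
  have h₂ := hx'.lt_of_two_mul_mul_sub_lt (y := x + 1) (by linarith [hx.2.2.1])
    (by linarith [hx.1, hx'.1])
  omega

end MemQnnInterval

lemma qnn_eq_of_memQnnInterval {n x h : ℤ} (hx : MemQnnInterval n x h) :
    qnn n h = ((n ^ 2 + 2 * ((h + 1) / 2) - 2 * x : ℤ) : WithTop ℤ) := by
  have h0 := hx.pos
  have hle := hx.le_sq_div_two
  rw [qnn]
  split_ifs with _ _ hc
  · omega
  · omega
  · rw [MemQnnInterval.unique hc.choose_spec hx]
  · exact absurd ⟨x, hx⟩ hc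

lemma coe_le_qnn_of_forall_memQnnInterval_le {n h k : ℤ} (h0 : 0 < h)
    (hk : ∀ x, MemQnnInterval n x h → x ≤ k) :
    ((n ^ 2 + 2 * ((h + 1) / 2) - 2 * k : ℤ) : WithTop ℤ) ≤ qnn n h := by
  by_cases hx : ∃ x, MemQnnInterval n x h
  · obtain ⟨x, hx⟩ := hx
    rw [qnn_eq_of_memQnnInterval hx, WithTop.coe_le_coe]
    linarith [hk x hx]
  · rw [qnn]
    split_ifs with _ _ hc
    · exact le_top
    · omega
    · exact absurd hc hx
    · exact le_top

lemma qnn_add_two_mul_mul_sub_one {p q : ℤ} (hq : 1 ≤ q) (hpq : q ≤ p) :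
    qnn (p + q) (2 * (p * q) - 1) = (((p + q) ^ 2 + 2 * (p * q) - 2 * p : ℤ) : WithTop ℤ) := by
  have hmem : MemQnnInterval (p + q) p (2 * (p * q) - 1) := by
    refine ⟨by omega, by omega, ?_, by linarith [show p + q - p = q by ring]⟩
    nlinarith [show p + q - p - 1 = q - 1 by ring]
  rw [qnn_eq_of_memQnnInterval hmem]
  congr 2
  omega

lemma MemQnnInterval.le_sub_two_of_two_mul_mul_sub_one {p q x : ℤ} (hq : 1 ≤ q) (hpq : q ≤ p)
    (hx : MemQnnInterval (p + q - 1) x (2 * (p * q) - 1)) : x ≤ p - 2 := by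
  have hlt := hx.lt_of_two_mul_mul_sub_lt (y := p - 1)
    (by nlinarith [show p + q - 1 - (p - 1) = q by ring]) (by linarith [hx.1])
  omega

/-- A dip `2p'q' + 1` of `q_{m+1,m}`, `p' + q' = m = p + q - 1`, equals `2pq - 1` only for
`p' ≤ p - 2`. -/
lemma le_sub_two_of_two_mul_mul_sub_one_eq {p q p' : ℤ} (hq : 2 ≤ q) (hpq : q ≤ p)
    (hp' : p + q - 1 - p' ≤ p')
    (heq : 2 * (p * q) - 1 = 2 * p' * (p + q - 1 - p') + 1) : p' ≤ p - 2 := by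
  have hlt : p' < p - 1 := lt_of_mul_sub_lt_mul_sub (m := p + q - 1) (by omega)
    (by nlinarith [show (p - 1) * (p + q - 1 - (p - 1)) = p * q - q by ring])
  omega

lemma sq_add_lt_of_sq_sub_one_div_two_lt {p q : ℤ} (hq : 2 ≤ q) (hpq : q ≤ p)
    (hlo : (p + q - 1) ^ 2 / 2 < 2 * (p * q) - 1)
    (hhi : 2 * (p * q) - 1 ≤ (p + q - 1) ^ 2 / 2 + (p + q - 1) / 2) :
    (p + q) ^ 2 + 2 * (p * q) - 2 * p
      < (p + q - 1) ^ 2 / 2 + 2 * (2 * (p * q) - 1) - 1 + (p + q - 1) := by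
  have hsq : (p + q - 1) ^ 2 = 4 * (p * q) + (p - q) ^ 2 - 2 * (p + q) + 1 := by ring
  have hsq' : (p + q) ^ 2 = (p + q - 1) ^ 2 + 2 * (p + q) - 1 := by ring
  have hd : 3 ≤ p - q := by
    by_contra! hd
    obtain h | h | h : p - q = 0 ∨ p - q = 1 ∨ p - q = 2 := by omega
    all_goals rw [h] at hsq; omega
  omega

lemma WithTop.coe_lt_add_coe_of_coe_le {a k b : ℤ} {t : WithTop ℤ} (hk : (k : WithTop ℤ) ≤ t)
    (hab : a < k + b) : (a : WithTop ℤ) < t + b :=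
  calc (a : WithTop ℤ) < ((k + b : ℤ) : WithTop ℤ) := WithTop.coe_lt_coe.2 hab
    _ = k + b := WithTop.coe_add k b
    _ ≤ t + b := by gcongr

/-- Addendum to Lemma 5.3: inequality (d) is strict at `h = 2pq - 1` for `p ≥ q ≥ 2`,
`p + q = n`, provided `2pq - 1 ≤ ⌊(n-1)²/2⌋ + ⌊(n-1)/2⌋`. -/
theorem qnn_lt_qn1n_add_at_2pq_sub_one (n p q : ℤ) (hpq : q ≤ p) (hq : 2 ≤ q)
    (hsum : p + q = n) (hmax : 2 * p * q - 1 ≤ (n - 1) ^ 2 / 2 + (n - 1) / 2) :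
    qnn n (2 * p * q - 1) < qn1n (n - 1) (2 * p * q - 1) + ((n - 1 : ℤ) : WithTop ℤ) := by
  subst hsum
  rw [mul_assoc] at hmax ⊢
  have h0 : 0 < 2 * (p * q) - 1 := by nlinarith
  have hsq : (p + q) ^ 2 = (p + q - 1) ^ 2 + 2 * (p + q) - 1 := by ring
  rw [qnn_add_two_mul_mul_sub_one (by omega) hpq, qn1n]
  split_ifs with hout hdip hlow
  · omega
  · obtain ⟨p', hp', -, heq, -⟩ := hdip
    have hp'p := le_sub_two_of_two_mul_mul_sub_one_eq hq hpq hp' heq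
    rw [add_assoc, ← WithTop.coe_add]
    refine WithTop.coe_lt_add_coe_of_coe_le (coe_le_qnn_of_forall_memQnnInterval_le (k := p' - 1)
      h0 fun x hx => ?_) (by omega)
    have := hx.lt_of_two_mul_mul_sub_lt (y := p') (by omega) (by linarith [hx.1])
    omega
  · rw [add_assoc, ← WithTop.coe_add]
    exact WithTop.coe_lt_add_coe_of_coe_le (coe_le_qnn_of_forall_memQnnInterval_le (k := p - 2)
      h0 fun x hx => hx.le_sub_two_of_two_mul_mul_sub_one (by omega) hpq) (by omega)
  · rw [← WithTop.coe_add, WithTop.coe_lt_coe]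
    exact sq_add_lt_of_sq_sub_one_div_two_lt hq hpq (by omega) hmax
end

section
/- Let n ≥ 3 be an integer and let h be an integer with 0 < h ≤ ⌊(n−1)²/2⌋. Let p ≥ q ≥ 1 be integers with p + q = n and 2(p+1)(q−1) < h ≤ 2pq, and let p' ≥ q' ≥ 1 be integers with p' + q' = n − 1 and 2(p'+1)(q'−1) < h ≤ 2p'q'. Then q' ≥ q; moreover, if h = 2(p'+1)(q'−1) + 1 and q' ≥ 2, then q' > q. -/
/-! The upper end `2 p' q'` of a level-`(n-1)` interval is `q' (n - 1 - q')`, a function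
increasing for `q' ≤ (n - 1)/2`; so an index `q' < q` would put the whole level-`(n-1)`
interval below `2 p (q - 1) ≤ 2 (p + 1) (q - 1)`, the lower end of the level-`n` interval
containing `h`. At equal index `q' = q` we have `p' = p - 1`, and the level-`(n-1)` lower
end lies `2 (q - 1) ≥ 2` below the level-`n` one, so `h` cannot sit just above it. -/

lemma mul_sub_le_mul_sub_of_le {a b m : ℤ} (hba : b ≤ a) (habm : a + b ≤ m) :
    b * (m - b) ≤ a * (m - a) := by
  nlinarith

lemma two_mul_mul_le_of_lt {p q p' q' : ℤ} (hpq : q ≤ p) (hq : 1 ≤ q)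
    (hsum : p' + q' = p + q - 1) (hlt : q' < q) :
    2 * p' * q' ≤ 2 * (p + 1) * (q - 1) := by
  have hp' : p' = (p + q - 1) - q' := by omega
  calc 2 * p' * q' = 2 * (q' * ((p + q - 1) - q')) := by rw [hp']; ring
    _ ≤ 2 * ((q - 1) * ((p + q - 1) - (q - 1))) := by
        have := mul_sub_le_mul_sub_of_le (a := q - 1) (b := q') (m := p + q - 1)
          (by omega) (by omega)
        linarith
    _ = 2 * p * (q - 1) := by ring
    _ ≤ 2 * (p + 1) * (q - 1) := by gcongr; omega

theorem interval_pair_compare_general (n h p q p' q' : ℤ)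
    (hpq : q ≤ p) (hq : 1 ≤ q) (hsum : p + q = n)
    (hlo : 2 * (p + 1) * (q - 1) < h)
    (hsum' : p' + q' = n - 1)
    (hhi' : h ≤ 2 * p' * q') :
    q ≤ q' ∧ (h = 2 * (p' + 1) * (q' - 1) + 1 → 2 ≤ q' → q < q') := by
  have hle : q ≤ q' := by
    by_contra! hlt
    have := two_mul_mul_le_of_lt (p' := p') hpq hq (by omega) hlt
    omega
  refine ⟨hle, fun hh hq2 => lt_of_le_of_ne hle ?_⟩
  rintro rfl
  have hlower : 2 * (p' + 1) * (q - 1) < 2 * (p + 1) * (q - 1) := by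
    gcongr <;> omega
  omega

/-- Key combinatorial step in the proof of inequality (d) of Lemma 5.3: if `h` lies in
the interval indexed by `(p, q)` at level `n` and in the interval indexed by `(p', q')`
at level `n - 1`, then `q' ≥ q`; moreover if `h = 2(p'+1)(q'-1) + 1` and `q' ≥ 2`
then `q' > q`. -/
theorem interval_pair_compare (n h p q p' q' : ℤ) (hn : 3 ≤ n) (h0 : 0 < h)
    (hmax : h ≤ (n - 1) ^ 2 / 2)
    (hpq : q ≤ p) (hq : 1 ≤ q) (hsum : p + q = n)
    (hlo : 2 * (p + 1) * (q - 1) < h) (hhi : h ≤ 2 * p * q)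
    (hpq' : q' ≤ p') (hq' : 1 ≤ q') (hsum' : p' + q' = n - 1)
    (hlo' : 2 * (p' + 1) * (q' - 1) < h) (hhi' : h ≤ 2 * p' * q') :
    q ≤ q' ∧ (h = 2 * (p' + 1) * (q' - 1) + 1 → 2 ≤ q' → q < q') :=
  interval_pair_compare_general n h p q p' q' hpq hq hsum hlo hsum' hhi'
end

section
/- For every integer n ≥ 1, the function q_{n,n} is nondecreasing on the nonnegative integers: for all integers h, h' with 0 ≤ h ≤ h', one has q_{n,n}(h) ≤ q_{n,n}(h') in ℤ ∪ {+∞}. -/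
def IsBlock (n p h : ℤ) : Prop :=
  n - p ≤ p ∧ 1 ≤ n - p ∧ 2 * (p + 1) * (n - p - 1) < h ∧ h ≤ 2 * p * (n - p)

lemma mul_sub_le_mul_sub_s16 {n p q : ℤ} (hp : n ≤ 2 * p) (hpq : p ≤ q) :
    q * (n - q) ≤ p * (n - p) := by
  nlinarith [mul_nonneg (sub_nonneg.2 hpq) (by omega : (0 : ℤ) ≤ p + q - n)]

lemma exists_isBlock {n p' h : ℤ} (hn : 0 ≤ n) (hp' : n - p' ≤ p') (hh : 0 < h)
    (hle : h ≤ 2 * p' * (n - p')) : ∃ p, IsBlock n p h := by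
  obtain ⟨p, ⟨hp, hhp⟩, hmax⟩ := Int.exists_greatest_of_bdd
    (P := fun p => n - p ≤ p ∧ h ≤ 2 * p * (n - p))
    ⟨n, fun z hz => by
      by_contra! hzn
      nlinarith [mul_pos (by omega : (0 : ℤ) < z) (by omega : (0 : ℤ) < z - n), hz.2]⟩
    ⟨p', hp', hle⟩
  have hq : 1 ≤ n - p := by
    by_contra! hq
    nlinarith [mul_nonneg (by omega : (0 : ℤ) ≤ p) (by omega : (0 : ℤ) ≤ p - n)]
  refine ⟨p, hp, hq, ?_, hhp⟩
  by_contra! hnext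
  have := hmax (p + 1) ⟨by omega, by linarith⟩
  omega

namespace IsBlock

variable {n p p' h h' : ℤ}

lemma pos (hb : IsBlock n p h) : 0 < h := by
  obtain ⟨hp, hq, hlow, -⟩ := hb
  nlinarith

lemma le_half_sq (hb : IsBlock n p h) : h ≤ n ^ 2 / 2 := by
  obtain ⟨-, -, -, hup⟩ := hb
  rw [Int.le_ediv_iff_mul_le two_pos]
  nlinarith [sq_nonneg (2 * p - n)]

lemma le_of_le (hb : IsBlock n p h) (hb' : IsBlock n p' h') (hhh : h ≤ h') : p' ≤ p := by
  by_contra! hlt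
  have hf := mul_sub_le_mul_sub_s16 (n := n) (by linarith [hb.1]) (Int.add_one_le_of_lt hlt)
  nlinarith [hb.2.2.1, hb'.2.2.2]

lemma unique (hb : IsBlock n p h) (hb' : IsBlock n p' h) : p = p' :=
  le_antisymm (hb'.le_of_le hb le_rfl) (hb.le_of_le hb' le_rfl)

end IsBlock

lemma qnn_of_isBlock {n p h : ℤ} (hb : IsBlock n p h) :
    qnn n h = ((n ^ 2 + 2 * ((h + 1) / 2) - 2 * p : ℤ) : WithTop ℤ) := by
  have hex : ∃ p, n - p ≤ p ∧ 1 ≤ n - p ∧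
      2 * (p + 1) * (n - p - 1) < h ∧ h ≤ 2 * p * (n - p) := ⟨p, hb⟩
  rw [qnn, if_neg (by have := hb.le_half_sq; have := hb.pos; omega), if_neg hb.pos.ne',
    dif_pos hex, IsBlock.unique hex.choose_spec hb]

lemma qnn_of_forall_not_isBlock {n h : ℤ} (hh : h ≠ 0) (hno : ∀ p, ¬ IsBlock n p h) :
    qnn n h = ⊤ := by
  rw [qnn, if_neg hh, dif_neg (fun ⟨p, hp⟩ => hno p hp), ite_self]

theorem qnn_monotone_general (n : ℤ) (h h' : ℤ) (h0 : 0 ≤ h) (hle : h ≤ h') :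
    qnn n h ≤ qnn n h' := by
  by_cases hh' : h' = 0
  · obtain rfl : h = h' := by omega
    exact le_rfl
  by_cases hex : ∃ p', IsBlock n p' h'
  swap
  · simp [qnn_of_forall_not_isBlock hh' (not_exists.mp hex)]
  obtain ⟨p', hb'⟩ := hex
  rw [qnn_of_isBlock hb']
  obtain rfl | hpos := h0.eq_or_lt
  · rw [qnn_zero, WithTop.coe_le_coe]
    have : 1 ≤ (h' + 1) / 2 := by have := hb'.pos; omega
    linarith [hb'.2.1]
  obtain ⟨p, hb⟩ := exists_isBlock (by linarith [hb'.1, hb'.2.1]) hb'.1 hpos (hle.trans hb'.2.2.2)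
  rw [qnn_of_isBlock hb, WithTop.coe_le_coe]
  have hhalf : (h + 1) / 2 ≤ (h' + 1) / 2 := Int.ediv_le_ediv two_pos (by omega)
  linarith [hb.le_of_le hb' hle]

/-- For `n ≥ 1`, the function `q_(n,n)` is nondecreasing on the nonnegative
integers. -/
theorem qnn_monotone (n : ℤ) (hn : 1 ≤ n) (h h' : ℤ) (h0 : 0 ≤ h) (hle : h ≤ h') :
    qnn n h ≤ qnn n h' :=
  qnn_monotone_general n h h' h0 hle
end
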